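/- Assume: (i) p is a non-zero-divisor in A; (ii) A is integrally closed in A[1/p]; (iii) the Frobenius endomorphism of A/pA is surjective; (iv) there exists a sequence (p_n)_{n ≥ 0} of elements of A with p_0 = p and p_{n+1}^p = p_n for all n ≥ 0. Let ϖ ∈ A^♭ be the element whose component of index n is p_n mod p, and set ξ = [ϖ] − p ∈ W(A^♭), where [ ] is the Teichmüller (multiplicative) representative. Then there is a unique ring homomorphism θ : W(A^♭) → Â such that for every n ≥ 1 the composite of θ with the projection Â → A/p^nA equals θ_n ∘ ν_n, and the sequence 0 → W(A^♭) → W(A^♭) → Â → 0, with first map multiplication by ξ and second map θ, is exact: multiplication by ξ is injective on W(A^♭), θ is surjective, and ker(θ) = ξ·W(A^♭). -/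

import Mathlib

/-!
Write `ξ = [ϖ] - p`. Modulo `p`, every `θ_n ∘ ν_n` reduces to `x ↦ pr_0 (x_0)`, and
`θ_{n+1}(p^n z)` depends only on `θ_{n+1}(z)` mod `p`. Since `W(A^♭)` is `p`-torsion free and
`p`-adically complete, surjectivity and `ker θ ⊆ ξ W(A^♭)` both follow by successive
approximation once two facts about `pr_0 : A^♭ → A/p` are known: it is surjective, since the
Frobenius of `A/p` is, and its kernel is `ϖ A^♭`. The second rests on integral closedness of `A`
in `A[1/p]`: `c^{p^n} ∈ pA` forces `p_n ∣ c`. An element `x ∈ ker θ` then has `x_0 = ϖ t`,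
so `x = ξ [t] + p x'`. Since `Â` is `p`-torsion free, `x' ∈ ker θ` again. Multiplication by
`ξ` is injective because `ϖ` is a non-zero-divisor: `ξ w = 0` forces `w_0 = 0`, hence `w = p w'`
with `ξ w' = 0`, so `w` is divisible by every power of `p`.
-/

/-- The canonical projection `A ⧸ (a) → A ⧸ (b)` when `b ∣ a`. -/
def qfactor {A : Type*} [CommRing A] {a b : A} (h : b ∣ a) :
    (A ⧸ Ideal.span {a}) →+* A ⧸ Ideal.span {b} :=
  Ideal.Quotient.lift _ (Ideal.Quotient.mk _) fun x hx => by
    rw [Ideal.Quotient.eq_zero_iff_mem]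
    exact Ideal.span_singleton_le_span_singleton.mpr h hx

/-- The inverse limit `lim_n A/a^n A`, as a subring of the product. -/
def towerRing {A : Type*} [CommRing A] (a : A) : Subring (∀ n, A ⧸ Ideal.span {a ^ n}) where
  carrier := {f | ∀ n, qfactor (pow_dvd_pow a (Nat.le_succ n)) (f (n + 1)) = f n}
  mul_mem' := by
    intro f g hf hg n
    simp only [Pi.mul_apply, map_mul, hf n, hg n]
  one_mem' := by
    intro n
    simp
  add_mem' := by
    intro f g hf hg n
    simp only [Pi.add_apply, map_add, hf n, hg n]
  zero_mem' := by
    intro n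
    simp
  neg_mem' := by
    intro f hf n
    simp only [Pi.neg_apply, map_neg, hf n]

section AdicApproximation

variable {R : Type*} [CommRing R] {π : R}

theorem smodEq_span_singleton_pow_iff {x y : R} {n : ℕ} :
    x ≡ y [SMOD (Ideal.span {π} ^ n • ⊤ : Submodule R R)] ↔ π ^ n ∣ x - y := by
  rw [SModEq.sub_mem, smul_eq_mul, Ideal.mul_top, Ideal.span_singleton_pow,
    Ideal.mem_span_singleton]

variable [IsAdicComplete (Ideal.span {π}) R]

theorem eq_zero_of_forall_pow_dvd {x : R} (h : ∀ n, π ^ n ∣ x) : x = 0 :=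
  IsHausdorff.haus inferInstance x fun n => by
    rw [smodEq_span_singleton_pow_iff, sub_zero]
    exact h n

theorem exists_pow_dvd_sub_of_pow_dvd_succ_sub {z : ℕ → R}
    (h : ∀ n, π ^ n ∣ z (n + 1) - z n) : ∃ L, ∀ n, π ^ n ∣ L - z n := by
  have hz : AdicCompletion.IsAdicCauchy (Ideal.span {π}) R z := by
    rw [AdicCompletion.isAdicCauchy_iff]
    intro n
    rw [smodEq_span_singleton_pow_iff, ← dvd_neg, neg_sub]
    exact h n
  obtain ⟨L, hL⟩ := IsPrecomplete.prec inferInstance hz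
  refine ⟨L, fun n => ?_⟩
  rw [← dvd_neg, neg_sub, ← smodEq_span_singleton_pow_iff]
  exact hL n

theorem exists_pow_dvd_sub_of_approx (Q : ℕ → R → Prop) {z₀ : R} (h₀ : Q 0 z₀)
    (step : ∀ n z, Q n z → ∃ w, Q (n + 1) (z + π ^ n * w)) :
    ∃ L, ∀ n, ∃ z, Q n z ∧ π ^ n ∣ L - z := by
  choose! w hw using step
  let z : ℕ → R := fun n => Nat.rec z₀ (fun n z => z + π ^ n * w n z) n
  have hQ : ∀ n, Q n (z n) := fun n => by
    induction n with
    | zero => exact h₀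
    | succ n ih => exact hw n _ ih
  obtain ⟨L, hL⟩ := exists_pow_dvd_sub_of_pow_dvd_succ_sub (π := π) (z := z)
    fun n => ⟨w n (z n), add_sub_cancel_left _ _⟩
  exact ⟨L, fun n => ⟨z n, hQ n, hL n⟩⟩

end AdicApproximation

namespace WittVector

variable {p : ℕ} [Fact p.Prime] {R : Type*} [CommRing R] [CharP R p] [PerfectRing R p]

theorem p_dvd_of_coeff_zero_eq_zero {x : WittVector p R} (hx : x.coeff 0 = 0) :
    (p : WittVector p R) ∣ x :=
  Ideal.mem_span_singleton.1 ((mem_span_p_iff_coeff_zero_eq_zero x).2 hx)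

theorem teichmuller_sub_p_mem_nonZeroDivisors {a : R} (ha : a ∈ nonZeroDivisors R) :
    teichmuller p a - p ∈ nonZeroDivisors (WittVector p R) := by
  suffices h : ∀ n (w : WittVector p R), (teichmuller p a - p) * w = 0 →
      (p : WittVector p R) ^ n ∣ w from
    mem_nonZeroDivisors_iff_left.2 fun w hw =>
      eq_zero_of_forall_pow_dvd (π := (p : WittVector p R)) fun n => h n w hw
  intro n
  induction n with
  | zero => simp
  | succ n ih =>
    intro w hw
    have hw₀ : a * w.coeff 0 = 0 := by
      simpa only [map_mul, map_sub, map_natCast, CharP.cast_eq_zero, sub_zero, map_zero,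
        constantCoeff_apply, teichmuller_coeff_zero] using congrArg constantCoeff hw
    obtain ⟨v, rfl⟩ :=
      p_dvd_of_coeff_zero_eq_zero ((mul_left_mem_nonZeroDivisors_eq_zero_iff ha).1 hw₀)
    have hv : (teichmuller p a - p) * v = 0 := by
      apply eq_zero_of_p_mul_eq_zero
      rw [← hw]
      ring
    rw [pow_succ']
    exact mul_dvd_mul_left _ (ih v hv)

end WittVector

theorem dvd_of_pow_dvd_pow_of_dvd_of_isIntegral {A : Type*} [CommRing A] {s : A}
    (hs : s ∈ nonZeroDivisors A)
    (hint : ∀ x : Localization.Away s, IsIntegral A x → ∃ a : A, algebraMap A _ a = x)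
    {b c : A} (hb : b ∣ s) {k : ℕ} (hk : k ≠ 0) (h : b ^ k ∣ c ^ k) : b ∣ c := by
  obtain ⟨a, ha⟩ := h
  let L := Localization.Away s
  obtain ⟨u, hu⟩ : IsUnit (algebraMap A L b) :=
    isUnit_of_dvd_unit (map_dvd _ hb) (IsLocalization.Away.algebraMap_isUnit s)
  have hcu : algebraMap A L c * ↑u⁻¹ * u = algebraMap A L c := by simp
  have hint_cu : IsIntegral A (algebraMap A L c * ↑u⁻¹) := by
    refine ⟨Polynomial.X ^ k - Polynomial.C a, Polynomial.monic_X_pow_sub_C a hk, ?_⟩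
    have : (algebraMap A L c * ↑u⁻¹) ^ k = algebraMap A L a := by
      rw [mul_pow, ← map_pow, ha, map_mul, map_pow, ← hu, mul_comm, ← mul_assoc, ← mul_pow,
        Units.inv_mul, one_pow, one_mul]
    simp [this]
  obtain ⟨e, he⟩ := hint _ hint_cu
  refine ⟨e, IsLocalization.injective L (Submonoid.powers_le.2 hs) ?_⟩
  rw [map_mul, he, ← hu, mul_comm, hcu]

section TowerRing

variable {A : Type*} [CommRing A]

instance Ideal.Quotient.subsingleton_span_pow_zero (a : A) :
    Subsingleton (A ⧸ Ideal.span {a ^ 0}) := by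
  rw [pow_zero, Ideal.span_singleton_one]
  infer_instance

theorem qfactor_mk {a b : A} (h : b ∣ a) (x : A) :
    qfactor h (Ideal.Quotient.mk _ x) = Ideal.Quotient.mk _ x :=
  Ideal.Quotient.lift_mk _ _ _

theorem mk_pow_eq_zero_of_le {a : A} {m n : ℕ} (h : m ≤ n) :
    Ideal.Quotient.mk (Ideal.span {a ^ m}) a ^ n = 0 := by
  rw [← map_pow, Ideal.Quotient.eq_zero_iff_mem, Ideal.mem_span_singleton]
  exact pow_dvd_pow a h

theorem exists_eq_mk_pow_mul_of_qfactor_eq_zero {a : A} {n : ℕ}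
    {e : A ⧸ Ideal.span {a ^ (n + 1)}} (he : qfactor (pow_dvd_pow a n.le_succ) e = 0) :
    ∃ c, e = Ideal.Quotient.mk _ (a ^ n * c) := by
  obtain ⟨e, rfl⟩ := Ideal.Quotient.mk_surjective e
  rw [qfactor_mk, Ideal.Quotient.eq_zero_iff_mem, Ideal.mem_span_singleton] at he
  obtain ⟨c, rfl⟩ := he
  exact ⟨c, rfl⟩

theorem mul_mk_pow_eq_of_qfactor_eq {a : A} {n : ℕ} {u v : A ⧸ Ideal.span {a ^ (n + 1)}}
    (h : qfactor (dvd_pow_self a n.succ_ne_zero) u = qfactor (dvd_pow_self a n.succ_ne_zero) v) :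
    u * Ideal.Quotient.mk _ a ^ n = v * Ideal.Quotient.mk _ a ^ n := by
  obtain ⟨u, rfl⟩ := Ideal.Quotient.mk_surjective u
  obtain ⟨v, rfl⟩ := Ideal.Quotient.mk_surjective v
  rw [qfactor_mk, qfactor_mk, Ideal.Quotient.eq, Ideal.mem_span_singleton] at h
  obtain ⟨c, hc⟩ := h
  rw [← map_pow, ← map_mul, ← map_mul, Ideal.Quotient.eq, Ideal.mem_span_singleton]
  exact ⟨c, by rw [← sub_mul, hc]; ring⟩

theorem towerRing_ext {a : A} {f g : towerRing a} (h : ∀ n, 1 ≤ n → f.1 n = g.1 n) : f = g :=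
  Subtype.ext <| funext fun n => by
    rcases n with _ | n
    · exact Subsingleton.elim _ _
    · exact h _ n.succ_pos

theorem towerRing.eq_zero_of_mul_natCast_eq_zero {p : ℕ} (hp : (p : A) ∈ nonZeroDivisors A)
    {f : towerRing (p : A)} (h : f * p = 0) : f = 0 := by
  refine towerRing_ext fun n _ => ?_
  obtain ⟨c, hc⟩ := Ideal.Quotient.mk_surjective (f.1 (n + 1))
  have hfn : f.1 n = Ideal.Quotient.mk _ c := by rw [← f.2 n, ← hc, qfactor_mk]
  have hcp : Ideal.Quotient.mk (Ideal.span {(p : A) ^ (n + 1)}) (c * p) = 0 := by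
    simpa [hc] using congrArg (fun g : towerRing (p : A) => g.1 (n + 1)) h
  rw [Ideal.Quotient.eq_zero_iff_mem, Ideal.mem_span_singleton, pow_succ] at hcp
  obtain ⟨d, hd⟩ := hcp
  have hc : c = (p : A) ^ n * d :=
    sub_eq_zero.1 <| (mul_right_mem_nonZeroDivisors_eq_zero_iff hp).1 (by rw [sub_mul, hd]; ring)
  rw [hfn, hc, map_mul, map_pow, mk_pow_eq_zero_of_le le_rfl, zero_mul]
  rfl

end TowerRing

namespace Tilt

variable {p : ℕ} {A : Type*} [CommRing A]
  {pseq : ℕ → A} (hpseq0 : pseq 0 = p) (hpseqS : ∀ n, pseq (n + 1) ^ p = pseq n)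

local notation "K" => A ⧸ Ideal.span {(p : A)}
local notation "mkp" => Ideal.Quotient.mk (Ideal.span {(p : A)})

include hpseq0 hpseqS

theorem pseq_pow_p_pow (n : ℕ) : pseq n ^ p ^ n = p := by
  induction n with
  | zero => simpa using hpseq0
  | succ n ih => rw [pow_succ', pow_mul, hpseqS, ih]

theorem mk_pseq_pow_eq_zero {n k : ℕ} (hk : p ^ n ≤ k) : mkp (pseq n) ^ k = 0 := by
  rw [← Nat.add_sub_cancel' hk, pow_add, ← map_pow, pseq_pow_p_pow hpseq0 hpseqS,
    Ideal.Quotient.mk_singleton_self, zero_mul]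

variable [Fact p.Prime]

theorem pseq_dvd_p (n : ℕ) : pseq n ∣ p :=
  pseq_pow_p_pow hpseq0 hpseqS n ▸ dvd_pow_self _ (pow_ne_zero n (Fact.out : p.Prime).ne_zero)

theorem pseq_mem_nonZeroDivisors (hp_nzd : (p : A) ∈ nonZeroDivisors A) (n : ℕ) :
    pseq n ∈ nonZeroDivisors A := by
  obtain ⟨k, hk⟩ := Nat.exists_eq_succ_of_ne_zero (pow_ne_zero n (Fact.out : p.Prime).ne_zero)
  rw [← pseq_pow_p_pow hpseq0 hpseqS n, hk, pow_succ] at hp_nzd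
  exact (mul_mem_nonZeroDivisors.1 hp_nzd).2

variable [CharP (A ⧸ Ideal.span {(p : A)}) p] (hp_nzd : (p : A) ∈ nonZeroDivisors A)

include hp_nzd

theorem mk_pow_p_eq_of_mk_pseq_mul_eq {n : ℕ} (hn : 1 ≤ n) {u v : A}
    (h : mkp (pseq n * u) = mkp (pseq n * v)) : mkp u ^ p = mkp v ^ p := by
  rw [Ideal.Quotient.eq, Ideal.mem_span_singleton, ← mul_sub] at h
  obtain ⟨d, hd⟩ := h
  have huv : u - v = pseq n ^ (p ^ n - 1) * d := by
    refine (mul_cancel_left_mem_nonZeroDivisors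
      (pseq_mem_nonZeroDivisors hpseq0 hpseqS hp_nzd n)).1 ?_
    rw [hd, ← mul_assoc, ← pow_succ', Nat.sub_add_cancel (Nat.one_le_pow _ _
      (Fact.out : p.Prime).pos), pseq_pow_p_pow hpseq0 hpseqS]
  have hexp : p ^ n ≤ (p ^ n - 1) * p := by
    have hp2 := (Fact.out : p.Prime).two_le
    have hpn2 : 2 ≤ p ^ n := hp2.trans (Nat.le_self_pow (Nat.one_le_iff_ne_zero.mp hn) p)
    calc p ^ n ≤ (p ^ n - 1) * 2 := by omega
      _ ≤ (p ^ n - 1) * p := Nat.mul_le_mul_left _ hp2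
  rw [← sub_eq_zero, ← sub_pow_char, ← map_sub, huv, map_mul, mul_pow, map_pow, ← pow_mul,
    mk_pseq_pow_eq_zero hpseq0 hpseqS hexp, zero_mul]

variable {ϖ : Perfection (A ⧸ Ideal.span {(p : A)}) p}
  (hϖ : ∀ n, Perfection.coeff (A ⧸ Ideal.span {(p : A)}) p n ϖ =
    Ideal.Quotient.mk (Ideal.span {(p : A)}) (pseq n))

include hϖ

theorem mem_nonZeroDivisors_of_coeff_eq : ϖ ∈ nonZeroDivisors (Perfection K p) := by
  refine mem_nonZeroDivisors_iff_left.2 fun y hy => Perfection.ext fun n => ?_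
  obtain ⟨c, hc⟩ := Ideal.Quotient.mk_surjective (Perfection.coeff K p (n + 1) y)
  have h : mkp (pseq (n + 1) * c) = mkp (pseq (n + 1) * 0) := by
    rw [map_mul, hc, ← hϖ, ← map_mul, hy, mul_zero, map_zero, map_zero]
  rw [← Perfection.coeff_pow_p', ← hc, map_zero,
    mk_pow_p_eq_of_mk_pseq_mul_eq hpseq0 hpseqS hp_nzd n.succ_pos h, map_zero,
    zero_pow (Fact.out : p.Prime).ne_zero]

theorem dvd_of_coeff_zero_eq_zero
    (hint : ∀ x : Localization.Away (p : A), IsIntegral A x →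
      ∃ a : A, algebraMap A (Localization.Away (p : A)) a = x)
    {y : Perfection K p} (hy : Perfection.coeff K p 0 y = 0) : ϖ ∣ y := by
  have hlift : ∀ n, ∃ e, mkp (pseq n * e) = Perfection.coeff K p n y := by
    intro n
    obtain ⟨c, hc⟩ := Ideal.Quotient.mk_surjective (Perfection.coeff K p n y)
    have hcp : pseq n ^ p ^ n ∣ c ^ p ^ n := by
      rw [pseq_pow_p_pow hpseq0 hpseqS, ← Ideal.mem_span_singleton,
        ← Ideal.Quotient.eq_zero_iff_mem, map_pow, hc, ← hy]
      simpa using Perfection.coeffMonoidHom_pow_p_pow_self y n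
    obtain ⟨e, rfl⟩ := dvd_of_pow_dvd_pow_of_dvd_of_isIntegral hp_nzd hint
      (pseq_dvd_p hpseq0 hpseqS n) (pow_ne_zero n (Fact.out : p.Prime).ne_zero) hcp
    exact ⟨e, hc⟩
  choose e he using hlift
  have hcompat : ∀ n, (mkp (e (n + 2)) ^ p) ^ p = mkp (e (n + 1)) ^ p := by
    intro n
    rw [← map_pow]
    refine mk_pow_p_eq_of_mk_pseq_mul_eq hpseq0 hpseqS hp_nzd n.succ_pos ?_
    rw [he, ← Perfection.coeff_pow_p' y (n + 1), ← he, ← hpseqS, map_mul, map_mul, map_pow,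
      map_pow, mul_pow]
  let t : Perfection K p := ⟨fun n => mkp (e (n + 1)) ^ p, hcompat⟩
  refine ⟨t, Perfection.ext fun n => ?_⟩
  rw [map_mul, hϖ, Perfection.coeff_mk, ← Perfection.coeff_pow_p' y n, ← he, ← hpseqS n,
    map_mul, mul_pow, map_pow]

end Tilt

section Theta

open WittVector

variable {p : ℕ} [Fact p.Prime] {A : Type*} [CommRing A] [CharP (A ⧸ Ideal.span {(p : A)}) p]

local notation "K" => A ⧸ Ideal.span {(p : A)}
local notation "mkp" => Ideal.Quotient.mk (Ideal.span {(p : A)})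
local notation "𝕎" => WittVector p

/-- The composite `θ_n ∘ ν_n : W(A^♭) → A/p^n`. -/
noncomputable def thetaLevel
    (Θ : ∀ n : ℕ, TruncatedWittVector p n K →+* A ⧸ Ideal.span {(p : A) ^ n}) (n : ℕ) :
    𝕎 (Perfection K p) →+* A ⧸ Ideal.span {(p : A) ^ n} :=
  (Θ n).comp ((truncate n).comp (WittVector.map (Perfection.coeff K p n)))

variable {Θ : ∀ n : ℕ, TruncatedWittVector p n (A ⧸ Ideal.span {(p : A)}) →+*
  A ⧸ Ideal.span {(p : A) ^ n}}

theorem thetaLevel_p_pow_mul {m n : ℕ} (h : m ≤ n) (w : 𝕎 (Perfection K p)) :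
    thetaLevel Θ m ((p : 𝕎 (Perfection K p)) ^ n * w) = 0 := by
  rw [map_mul, map_pow, map_natCast, ← map_natCast (Ideal.Quotient.mk _),
    mk_pow_eq_zero_of_le h, zero_mul]

variable (hΘ : ∀ n : ℕ, ∀ _hn : 1 ≤ n,
    ∀ w : WittVector p (A ⧸ Ideal.span {(p : A) ^ n}),
      Θ n (WittVector.truncate n
          (WittVector.map (qfactor (dvd_pow_self (p : A) (Nat.one_le_iff_ne_zero.mp _hn))) w)) =
        ∑ i : Fin n, (p : A ⧸ Ideal.span {(p : A) ^ n}) ^ (i : ℕ) *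
          (WittVector.truncate n w).coeff i ^ p ^ (n - (i : ℕ)))

include hΘ

theorem thetaLevel_eq_mk_sum {n : ℕ} (hn : 1 ≤ n) (x : 𝕎 (Perfection K p))
    (b : ℕ → A) (hb : ∀ i < n, mkp (b i) = Perfection.coeff K p n (x.coeff i)) :
    thetaLevel Θ n x =
      Ideal.Quotient.mk _ (∑ i ∈ Finset.range n, (p : A) ^ i * b i ^ p ^ (n - i)) := by
  have hx : truncate n (WittVector.map (Perfection.coeff K p n) x) =
      truncate n (WittVector.map (qfactor (dvd_pow_self (p : A) (Nat.one_le_iff_ne_zero.mp hn)))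
        (WittVector.mk p fun i => Ideal.Quotient.mk (Ideal.span {(p : A) ^ n}) (b i))) := by
    ext i
    rw [coeff_truncate, coeff_truncate, map_coeff, map_coeff, coeff_mk, qfactor_mk, hb i i.2]
  rw [thetaLevel, RingHom.comp_apply, RingHom.comp_apply, hx, hΘ n hn, map_sum,
    Finset.sum_range]
  simp only [coeff_truncate, coeff_mk, map_mul, map_pow, map_natCast]

theorem qfactor_thetaLevel_succ (n : ℕ) (x : 𝕎 (Perfection K p)) :
    qfactor (pow_dvd_pow (p : A) n.le_succ) (thetaLevel Θ (n + 1) x) = thetaLevel Θ n x := by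
  rcases Nat.eq_zero_or_pos n with rfl | hn
  · exact Subsingleton.elim _ _
  choose b hb using fun i => Ideal.Quotient.mk_surjective
    (I := Ideal.span {(p : A)}) (Perfection.coeff K p (n + 1) (x.coeff i))
  have hb' : ∀ i < n, mkp (b i ^ p) = Perfection.coeff K p n (x.coeff i) := fun i _ => by
    rw [map_pow, hb, Perfection.coeff_pow_p']
  rw [thetaLevel_eq_mk_sum hΘ (Nat.le_add_left 1 n) x b fun i _ => hb i,
    thetaLevel_eq_mk_sum hΘ hn x (fun i => b i ^ p) hb', qfactor_mk, Finset.sum_range_succ,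
    map_add, map_mul (Ideal.Quotient.mk _) (_ ^ n), Ideal.Quotient.mk_singleton_self, zero_mul,
    add_zero]
  refine congrArg _ (Finset.sum_congr rfl fun i hi => ?_)
  rw [← pow_mul, ← pow_succ', Nat.sub_add_comm (Finset.mem_range.1 hi).le]

theorem qfactor_thetaLevel {n : ℕ} (hn : 1 ≤ n) (x : 𝕎 (Perfection K p)) :
    qfactor (dvd_pow_self (p : A) (Nat.one_le_iff_ne_zero.mp hn)) (thetaLevel Θ n x) =
      Perfection.coeff K p 0 (x.coeff 0) := by
  choose b hb using fun i => Ideal.Quotient.mk_surjective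
    (I := Ideal.span {(p : A)}) (Perfection.coeff K p n (x.coeff i))
  rw [thetaLevel_eq_mk_sum hΘ hn x b fun i _ => hb i, qfactor_mk, map_sum,
    Finset.sum_eq_single_of_mem 0 (Finset.mem_range.2 hn)]
  · simpa [hb] using Perfection.coeffMonoidHom_pow_p_pow_self (x.coeff 0) n
  · intro i _ hi
    rw [Ideal.Quotient.eq_zero_iff_mem, Ideal.mem_span_singleton]
    exact dvd_mul_of_dvd_left (dvd_pow_self _ hi) _

theorem thetaLevel_teichmuller {n : ℕ} (hn : 1 ≤ n) (b : Perfection K p) {ℓ : A}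
    (hℓ : mkp ℓ = Perfection.coeff K p n b) :
    thetaLevel Θ n (teichmuller p b) = Ideal.Quotient.mk _ (ℓ ^ p ^ n) := by
  have hb : ∀ i < n, mkp (if i = 0 then ℓ else 0) =
      Perfection.coeff K p n ((teichmuller p b).coeff i) := by
    intro i _
    rcases Nat.eq_zero_or_pos i with rfl | hi
    · simpa [teichmuller_coeff_zero] using hℓ
    · rw [teichmuller_coeff_pos p b i hi, if_neg hi.ne', map_zero, map_zero]
  rw [thetaLevel_eq_mk_sum hΘ hn _ _ hb, Finset.sum_eq_single_of_mem 0 (Finset.mem_range.2 hn)]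
  · simp
  · intro i _ hi
    rw [if_neg hi, zero_pow (pow_ne_zero _ (Fact.out : p.Prime).ne_zero), mul_zero]

noncomputable def towerTheta : 𝕎 (Perfection K p) →+* towerRing (p : A) :=
  RingHom.codRestrict (RingHom.pi fun n => thetaLevel Θ n) _
    fun x n => qfactor_thetaLevel_succ hΘ n x

theorem towerTheta_apply_coe (x : 𝕎 (Perfection K p)) (n : ℕ) :
    (towerTheta hΘ x).1 n = thetaLevel Θ n x :=
  rfl

theorem eq_towerTheta (θ : 𝕎 (Perfection K p) →+* towerRing (p : A))
    (hθ : ∀ n, 1 ≤ n → ∀ x, (θ x).1 n = thetaLevel Θ n x) : θ = towerTheta hΘ :=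
  RingHom.ext fun x => towerRing_ext fun n hn => hθ n hn x

theorem exists_thetaLevel_add_p_pow_mul_eq (hfrob : Function.Surjective (frobenius K p))
    (y : towerRing (p : A)) {n : ℕ} {x : 𝕎 (Perfection K p)}
    (hx : ∀ m, 1 ≤ m → m ≤ n → thetaLevel Θ m x = y.1 m) :
    ∃ w, ∀ m, 1 ≤ m → m ≤ n + 1 → thetaLevel Θ m (x + p ^ n * w) = y.1 m := by
  have herr : qfactor (pow_dvd_pow (p : A) n.le_succ)
      (y.1 (n + 1) - thetaLevel Θ (n + 1) x) = 0 := by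
    rcases Nat.eq_zero_or_pos n with rfl | hn
    · exact Subsingleton.elim _ _
    rw [map_sub, qfactor_thetaLevel_succ hΘ, y.2 n, hx n hn le_rfl, sub_self]
  obtain ⟨a, ha⟩ := exists_eq_mk_pow_mul_of_qfactor_eq_zero herr
  obtain ⟨b, hb⟩ := Perfection.coeff_surjective hfrob 0 (mkp a)
  refine ⟨teichmuller p b, fun m hm hmn => ?_⟩
  rcases hmn.lt_or_eq with hlt | rfl
  · rw [map_add, thetaLevel_p_pow_mul (Nat.le_of_lt_succ hlt), add_zero,
      hx m hm (Nat.le_of_lt_succ hlt)]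
  have hθb : qfactor (dvd_pow_self (p : A) n.succ_ne_zero)
      (thetaLevel Θ (n + 1) (teichmuller p b)) =
      qfactor (dvd_pow_self (p : A) n.succ_ne_zero) (Ideal.Quotient.mk _ a) := by
    rw [qfactor_thetaLevel hΘ n.succ_pos, teichmuller_coeff_zero, hb, qfactor_mk]
  rw [map_add, map_mul, map_pow, map_natCast, ← map_natCast (Ideal.Quotient.mk _), mul_comm,
    mul_mk_pow_eq_of_qfactor_eq hθb, ← map_pow, ← map_mul, mul_comm, ← ha, add_sub_cancel]

theorem towerTheta_surjective (hfrob : Function.Surjective (frobenius K p)) :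
    Function.Surjective (towerTheta hΘ) := by
  intro y
  obtain ⟨L, hL⟩ := exists_pow_dvd_sub_of_approx (π := (p : 𝕎 (Perfection K p)))
    (fun n x => ∀ m, 1 ≤ m → m ≤ n → thetaLevel Θ m x = y.1 m) (z₀ := 0)
    (fun _ h₁ h₂ => absurd (h₁.trans h₂) (by norm_num))
    fun n x hx => exists_thetaLevel_add_p_pow_mul_eq hΘ hfrob y hx
  refine ⟨L, towerRing_ext fun n hn => ?_⟩
  obtain ⟨z, hz, w, hw⟩ := hL n
  rw [towerTheta_apply_coe, ← sub_add_cancel L z, hw, map_add, thetaLevel_p_pow_mul le_rfl,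
    zero_add, hz n hn le_rfl]

variable {pseq : ℕ → A} (hpseq0 : pseq 0 = p) (hpseqS : ∀ n, pseq (n + 1) ^ p = pseq n)
  {ϖ : Perfection (A ⧸ Ideal.span {(p : A)}) p}
  (hϖ : ∀ n, Perfection.coeff (A ⧸ Ideal.span {(p : A)}) p n ϖ =
    Ideal.Quotient.mk (Ideal.span {(p : A)}) (pseq n))

include hpseq0 hpseqS hϖ

theorem towerTheta_teichmuller_sub_p : towerTheta hΘ (teichmuller p ϖ - p) = 0 :=
  towerRing_ext fun n hn => by
    rw [towerTheta_apply_coe, map_sub, thetaLevel_teichmuller hΘ hn ϖ (hϖ n).symm,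
      Tilt.pseq_pow_p_pow hpseq0 hpseqS, map_natCast, map_natCast, sub_self]
    rfl

variable (hp_nzd : (p : A) ∈ nonZeroDivisors A)
  (hint : ∀ x : Localization.Away (p : A), IsIntegral A x →
    ∃ a : A, algebraMap A (Localization.Away (p : A)) a = x)

include hp_nzd hint

theorem exists_eq_teichmuller_sub_p_mul_add_p_mul {x : 𝕎 (Perfection K p)}
    (hx : towerTheta hΘ x = 0) :
    ∃ t x', x = (teichmuller p ϖ - p) * t + p * x' ∧ towerTheta hΘ x' = 0 := by
  have hx₀ : Perfection.coeff K p 0 (x.coeff 0) = 0 := by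
    rw [← qfactor_thetaLevel hΘ le_rfl, ← towerTheta_apply_coe hΘ, hx]
    exact map_zero _
  obtain ⟨t, ht⟩ := Tilt.dvd_of_coeff_zero_eq_zero hpseq0 hpseqS hp_nzd hϖ hint hx₀
  obtain ⟨v, hv⟩ : (p : 𝕎 (Perfection K p)) ∣ x - teichmuller p ϖ * teichmuller p t := by
    refine p_dvd_of_coeff_zero_eq_zero ?_
    rw [← constantCoeff_apply, map_sub, map_mul]
    simp only [constantCoeff_apply, teichmuller_coeff_zero, ht, sub_self]
  have hdecomp : x = (teichmuller p ϖ - p) * teichmuller p t + p * (teichmuller p t + v) := by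
    linear_combination hv
  refine ⟨_, _, hdecomp, towerRing.eq_zero_of_mul_natCast_eq_zero hp_nzd ?_⟩
  have := congrArg (towerTheta hΘ) hdecomp
  rwa [hx, map_add, map_mul, map_mul, towerTheta_teichmuller_sub_p hΘ hpseq0 hpseqS hϖ,
    zero_mul, zero_add, map_natCast, mul_comm, eq_comm] at this

theorem towerTheta_eq_zero_iff (x : 𝕎 (Perfection K p)) :
    towerTheta hΘ x = 0 ↔ ∃ z, x = (teichmuller p ϖ - p) * z := by
  refine ⟨fun hx => ?_, ?_⟩
  · have step : ∀ n z, (∃ x', x - (teichmuller p ϖ - p) * z = p ^ n * x' ∧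
        towerTheta hΘ x' = 0) → ∃ w x', x - (teichmuller p ϖ - p) * (z + p ^ n * w) =
          p ^ (n + 1) * x' ∧ towerTheta hΘ x' = 0 := by
      rintro n z ⟨x', hx', hθx'⟩
      obtain ⟨t, x'', hx'', hθx''⟩ :=
        exists_eq_teichmuller_sub_p_mul_add_p_mul hΘ hpseq0 hpseqS hϖ hp_nzd hint hθx'
      exact ⟨t, x'', by linear_combination hx' + (p : 𝕎 (Perfection K p)) ^ n * hx'', hθx''⟩
    obtain ⟨L, hL⟩ := exists_pow_dvd_sub_of_approx (π := (p : 𝕎 (Perfection K p))) _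
      (z₀ := 0) ⟨x, by simp, hx⟩ step
    refine ⟨L, sub_eq_zero.1 <| eq_zero_of_forall_pow_dvd (π := (p : 𝕎 (Perfection K p)))
      fun n => ?_⟩
    obtain ⟨z, ⟨x', hx', -⟩, w, hw⟩ := hL n
    exact ⟨x' - (teichmuller p ϖ - p) * w,
      by linear_combination hx' - (teichmuller p ϖ - p) * hw⟩
  · rintro ⟨z, rfl⟩
    rw [map_mul, towerTheta_teichmuller_sub_p hΘ hpseq0 hpseqS hϖ, zero_mul]

end Theta

/-- Fontaine's theta: let `p` be a prime, `A` a `ℤ_(p)`-algebra such that `p` is a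
non-zero-divisor in `A`, `A` is integrally closed in `A[1/p]`, the Frobenius of `A/pA` is
surjective, and `p` admits a compatible system of `p`-power roots `(p_n)`.  Let
`ϖ ∈ A^♭` have components `p_n mod p` and set `ξ = [ϖ] - p ∈ W(A^♭)`.  Then there is a
unique ring homomorphism `θ : W(A^♭) → Â = lim_n A/p^nA` whose composite with each
projection `Â → A/p^nA` (`n ≥ 1`) equals `θ_n ∘ ν_n`, and the sequence
`0 → W(A^♭) → W(A^♭) → Â → 0` (multiplication by `ξ`, then `θ`) is exact. -/
theorem statement17 (p : ℕ) [Fact p.Prime] {A : Type*} [CommRing A]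
    [CharP (A ⧸ Ideal.span {(p : A)}) p]
    (hp_nzd : (p : A) ∈ nonZeroDivisors A)
    (hintcl : ∀ x : Localization.Away (p : A), IsIntegral A x →
      ∃ a : A, algebraMap A (Localization.Away (p : A)) a = x)
    (hfrob : ∀ y : A ⧸ Ideal.span {(p : A)}, ∃ x, x ^ p = y)
    (pseq : ℕ → A) (hpseq0 : pseq 0 = p) (hpseqS : ∀ n, pseq (n + 1) ^ p = pseq n)
    (ϖ : Perfection (A ⧸ Ideal.span {(p : A)}) p)
    (hϖ : ∀ n, Perfection.coeff (A ⧸ Ideal.span {(p : A)}) p n ϖ =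
      Ideal.Quotient.mk _ (pseq n))
    (Θ : ∀ n : ℕ, TruncatedWittVector p n (A ⧸ Ideal.span {(p : A)}) →+*
      A ⧸ Ideal.span {(p : A) ^ n})
    (hΘ : ∀ n : ℕ, ∀ _hn : 1 ≤ n, ∀ w : WittVector p (A ⧸ Ideal.span {(p : A) ^ n}),
      Θ n (WittVector.truncate n
          (WittVector.map (qfactor (dvd_pow_self (p : A) (by omega))) w)) =
        ∑ i : Fin n, (p : A ⧸ Ideal.span {(p : A) ^ n}) ^ (i : ℕ) *
          (WittVector.truncate n w).coeff i ^ p ^ (n - (i : ℕ))) :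
    (∃! θ : WittVector p (Perfection (A ⧸ Ideal.span {(p : A)}) p) →+*
        ↥(towerRing (p : A)),
      ∀ n, 1 ≤ n → ∀ x, (θ x).1 n =
        Θ n (WittVector.truncate n
          (WittVector.map (Perfection.coeff (A ⧸ Ideal.span {(p : A)}) p n) x))) ∧
    (∀ θ : WittVector p (Perfection (A ⧸ Ideal.span {(p : A)}) p) →+*
        ↥(towerRing (p : A)),
      (∀ n, 1 ≤ n → ∀ x, (θ x).1 n =
        Θ n (WittVector.truncate n
          (WittVector.map (Perfection.coeff (A ⧸ Ideal.span {(p : A)}) p n) x))) →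
      (Function.Injective fun w : WittVector p (Perfection (A ⧸ Ideal.span {(p : A)}) p) =>
        (WittVector.teichmuller p ϖ - p) * w) ∧
      Function.Surjective θ ∧
      (∀ w, θ w = 0 ↔ ∃ z, w = (WittVector.teichmuller p ϖ - p) * z)) := by
  have hξ := WittVector.teichmuller_sub_p_mem_nonZeroDivisors
    (Tilt.mem_nonZeroDivisors_of_coeff_eq hpseq0 hpseqS hp_nzd hϖ)
  refine ⟨⟨towerTheta hΘ, fun _ _ _ => rfl, fun θ hθ => eq_towerTheta hΘ θ hθ⟩,
    fun θ hθ => ?_⟩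
  obtain rfl := eq_towerTheta hΘ θ hθ
  have hfrob' : Function.Surjective (frobenius (A ⧸ Ideal.span {(p : A)}) p) :=
    fun y => (hfrob y).imp fun _ hx => by rwa [frobenius_def]
  exact ⟨fun _ _ h => (mul_cancel_left_mem_nonZeroDivisors hξ).1 h,
    towerTheta_surjective hΘ hfrob', towerTheta_eq_zero_iff hΘ hpseq0 hpseqS hϖ hp_nzd hintcl⟩
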